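/- Let d ≥ 1, let ϑ : ℝ^d → ℂ be a Schwartz function, let t > 0, and let u ∈ L²(ℝ^d). Define γ(t, v) = ∫_{ℝ^d} u(x) conj(Ψ_v(t, x)) dx. Then v ↦ γ(t, v) belongs to L²(ℝ^d) and ‖γ(t, ·)‖_{L²(ℝ^d)} ≤ 2^{−d/2} ‖ϑ‖_{L¹(ℝ^d)} ‖u‖_{L²(ℝ^d)}; in particular ‖γ(t,·)‖_{L²_v} ≲ ‖u‖_{L²_x} with a constant depending only on d and ϑ. -/

import Mathlib

open MeasureTheory

/-- The wavepacket with velocity `v`: `Ψ_v(t,x) = e^{i|x|²/(4t)} ϑ((x − 2tv)/t^{1/2})`. -/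
noncomputable def wavePacket {d : ℕ} (ϑ : SchwartzMap (EuclideanSpace ℝ (Fin d)) ℂ)
    (v : EuclideanSpace ℝ (Fin d)) (t : ℝ) (x : EuclideanSpace ℝ (Fin d)) : ℂ :=
  Complex.exp (Complex.I * ((‖x‖ ^ 2 / (4 * t) : ℝ) : ℂ)) *
    ϑ ((Real.sqrt t)⁻¹ • (x - (2 * t) • v))

/-- `γ(t, v) = ∫ u(x) conj(Ψ_v(t,x)) dx`. -/
noncomputable def gam {d : ℕ} (ϑ : SchwartzMap (EuclideanSpace ℝ (Fin d)) ℂ)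
    (t : ℝ) (u : EuclideanSpace ℝ (Fin d) → ℂ) (v : EuclideanSpace ℝ (Fin d)) : ℂ :=
  ∫ x, u x * (starRingEnd ℂ) (wavePacket ϑ v t x)

/-!
Since `|Ψ_v(t, x)| = |ϑ((x - 2tv)/√t)|`, the map `u ↦ γ(t, ·)` is an integral operator whose
kernel satisfies `∫ |Ψ_v(t, x)| dx = t^{d/2} ‖ϑ‖₁` for every `v` and
`∫ |Ψ_v(t, x)| dv = (2√t)^{-d} ‖ϑ‖₁` for every `x` (both by a change of variables). Schur's test
bounds its `L² → L²` norm by the geometric mean of these two numbers, which is `2^{-d/2} ‖ϑ‖₁`.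
-/

open scoped ENNReal
open Function

section SchurTest

variable {α β : Type*} [MeasurableSpace α] [MeasurableSpace β] {μ : Measure α} {ν : Measure β}

theorem eLpNorm_two_sq {ε : Type*} [ENorm ε] (f : α → ε) :
    eLpNorm f 2 μ ^ 2 = ∫⁻ x, ‖f x‖ₑ ^ 2 ∂μ := by
  simpa [ENNReal.rpow_two] using eLpNorm_nnreal_pow_eq_lintegral (f := f) (μ := μ) two_ne_zero

theorem ENNReal.lintegral_mul_sq_le {W K : α → ℝ≥0∞} (hW : AEMeasurable W μ)
    (hK : AEMeasurable K μ) :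
    (∫⁻ x, W x * K x ∂μ) ^ 2 ≤ (∫⁻ x, W x ^ 2 * K x ∂μ) * ∫⁻ x, K x ∂μ := by
  -- Cauchy–Schwarz for `W √K` and `√K`.
  have hsqrt : ∀ x, K x ^ (2⁻¹ : ℝ) * K x ^ (2⁻¹ : ℝ) = K x := fun x => by
    rw [← ENNReal.rpow_add_of_nonneg _ _ (by norm_num) (by norm_num)]; norm_num
  have hsq : ∀ a : ℝ≥0∞, (a ^ (2⁻¹ : ℝ)) ^ (2 : ℝ) = a := fun a => by
    rw [← ENNReal.rpow_mul]; norm_num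
  have h := ENNReal.lintegral_mul_le_Lp_mul_Lq μ Real.HolderConjugate.two_two
    (hW.mul (hK.pow_const (2⁻¹ : ℝ))) (hK.pow_const (2⁻¹ : ℝ))
  simp only [Pi.mul_apply, mul_assoc, hsqrt, ENNReal.mul_rpow_of_nonneg _ _ zero_le_two, hsq,
    ENNReal.rpow_two, one_div] at h
  calc (∫⁻ x, W x * K x ∂μ) ^ 2
      ≤ ((∫⁻ x, W x ^ 2 * K x ∂μ) ^ (2⁻¹ : ℝ) * (∫⁻ x, K x ∂μ) ^ (2⁻¹ : ℝ)) ^ 2 :=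
        pow_le_pow_left₀ zero_le h 2
    _ = (∫⁻ x, W x ^ 2 * K x ∂μ) * ∫⁻ x, K x ∂μ := by
        rw [mul_pow, ← ENNReal.rpow_two, ← ENNReal.rpow_two, hsq, hsq]

theorem lintegral_sq_lintegral_mul_le [SFinite μ] [SFinite ν] {K : β → α → ℝ≥0∞}
    (hK : Measurable (uncurry K)) {A B : ℝ≥0∞} (hA : ∀ v, ∫⁻ x, K v x ∂μ ≤ A)
    (hB : ∀ x, ∫⁻ v, K v x ∂ν ≤ B) {g : α → ℝ≥0∞} (hg : AEMeasurable g μ) :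
    ∫⁻ v, (∫⁻ x, g x * K v x ∂μ) ^ 2 ∂ν ≤ A * B * ∫⁻ x, g x ^ 2 ∂μ := by
  have hKv : ∀ v, Measurable (K v) := fun v => hK.comp measurable_prodMk_left
  have hKx : ∀ x, Measurable (K · x) := fun x => hK.comp measurable_prodMk_right
  have hprod : AEMeasurable (uncurry fun v x => g x ^ 2 * K v x) (ν.prod μ) :=
    (hg.pow_const 2).comp_snd.mul hK.aemeasurable
  calc ∫⁻ v, (∫⁻ x, g x * K v x ∂μ) ^ 2 ∂ν
      ≤ ∫⁻ v, (∫⁻ x, g x ^ 2 * K v x ∂μ) * A ∂ν := lintegral_mono fun v =>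
        (ENNReal.lintegral_mul_sq_le hg (hKv v).aemeasurable).trans (by gcongr; exact hA v)
    _ = (∫⁻ x, ∫⁻ v, g x ^ 2 * K v x ∂ν ∂μ) * A := by
        rw [lintegral_mul_const'' _ hprod.lintegral_prod_right, lintegral_lintegral_swap hprod]
    _ = (∫⁻ x, g x ^ 2 * ∫⁻ v, K v x ∂ν ∂μ) * A := by
        simp_rw [lintegral_const_mul _ (hKx _)]
    _ ≤ (∫⁻ x, g x ^ 2 * B ∂μ) * A := by gcongr with x; exact hB x
    _ = A * B * ∫⁻ x, g x ^ 2 ∂μ := by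
        rw [lintegral_mul_const'' _ (hg.pow_const 2)]; ring

theorem eLpNorm_two_integral_mul_sq_le [SFinite μ] [SFinite ν] {𝕜 : Type*} [RCLike 𝕜]
    {k : β → α → 𝕜} (hk : StronglyMeasurable (uncurry k)) {A B : ℝ≥0∞}
    (hA : ∀ v, ∫⁻ x, ‖k v x‖ₑ ∂μ ≤ A) (hB : ∀ x, ∫⁻ v, ‖k v x‖ₑ ∂ν ≤ B) {f : α → 𝕜}
    (hf : AEStronglyMeasurable f μ) :
    eLpNorm (fun v => ∫ x, f x * k v x ∂μ) 2 ν ^ 2 ≤ A * B * eLpNorm f 2 μ ^ 2 := by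
  rw [eLpNorm_two_sq, eLpNorm_two_sq]
  calc ∫⁻ v, ‖∫ x, f x * k v x ∂μ‖ₑ ^ 2 ∂ν
      ≤ ∫⁻ v, (∫⁻ x, ‖f x‖ₑ * ‖k v x‖ₑ ∂μ) ^ 2 ∂ν := lintegral_mono fun v => by
        gcongr
        refine (enorm_integral_le_lintegral_enorm _).trans_eq ?_
        simp_rw [enorm_mul]
    _ ≤ A * B * ∫⁻ x, ‖f x‖ₑ ^ 2 ∂μ :=
        lintegral_sq_lintegral_mul_le hk.measurable.enorm hA hB hf.enorm

theorem aestronglyMeasurable_integral_mul [SFinite μ] {𝕜 : Type*} [RCLike 𝕜]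
    {k : β → α → 𝕜} (hk : StronglyMeasurable (uncurry k)) {f : α → 𝕜}
    (hf : AEStronglyMeasurable f μ) :
    AEStronglyMeasurable (fun v => ∫ x, f x * k v x ∂μ) ν :=
  (hf.comp_snd.mul hk.aestronglyMeasurable).integral_prod_right'

end SchurTest

theorem MeasureTheory.Measure.lintegral_comp_smul_sub {E : Type*} [NormedAddCommGroup E]
    [NormedSpace ℝ E] [FiniteDimensional ℝ E] [MeasurableSpace E] [BorelSpace E]
    (μ : Measure E) [μ.IsAddHaarMeasure] (g : E → ℝ≥0∞) {c : ℝ} (hc : c ≠ 0) (w : E) :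
    ∫⁻ x, g (c • (x - w)) ∂μ = ENNReal.ofReal |(c ^ Module.finrank ℝ E)⁻¹| * ∫⁻ x, g x ∂μ := by
  rw [lintegral_sub_right_eq_self (fun x => g (c • x)) w, ← smul_eq_mul,
    ← lintegral_smul_measure, ← Measure.map_addHaar_smul μ hc]
  exact (lintegral_map_equiv g (MeasurableEquiv.smul₀ c hc)).symm

section WavePacket

variable {d : ℕ} (ϑ : SchwartzMap (EuclideanSpace ℝ (Fin d)) ℂ) {t : ℝ}

theorem continuous_wavePacket_uncurry :
    Continuous (uncurry fun v x => wavePacket ϑ v t x) := by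
  unfold wavePacket
  have := ϑ.continuous
  fun_prop

theorem enorm_wavePacket (v : EuclideanSpace ℝ (Fin d)) (x : EuclideanSpace ℝ (Fin d)) :
    ‖wavePacket ϑ v t x‖ₑ = ‖ϑ ((Real.sqrt t)⁻¹ • (x - (2 * t) • v))‖ₑ := by
  rw [wavePacket, enorm_mul, mul_comm Complex.I, ← enorm_norm, Complex.norm_exp_ofReal_mul_I,
    enorm_one, one_mul]

theorem lintegral_enorm_wavePacket (ht : 0 < t) (v : EuclideanSpace ℝ (Fin d)) :
    ∫⁻ x, ‖wavePacket ϑ v t x‖ₑ = ENNReal.ofReal (Real.sqrt t ^ d * ∫ y, ‖ϑ y‖) := by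
  have hs : 0 < Real.sqrt t := Real.sqrt_pos.2 ht
  simp_rw [enorm_wavePacket,
    Measure.lintegral_comp_smul_sub volume (‖ϑ ·‖ₑ) (inv_ne_zero hs.ne'),
    finrank_euclideanSpace_fin, inv_pow, inv_inv, abs_of_pos (pow_pos hs d)]
  rw [ENNReal.ofReal_mul (by positivity), ofReal_integral_norm_eq_lintegral_enorm ϑ.integrable]

theorem lintegral_enorm_wavePacket_velocity (ht : 0 < t) (x : EuclideanSpace ℝ (Fin d)) :
    ∫⁻ v, ‖wavePacket ϑ v t x‖ₑ = ENNReal.ofReal ((2 * Real.sqrt t)⁻¹ ^ d * ∫ y, ‖ϑ y‖) := by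
  have harg : ∀ v : EuclideanSpace ℝ (Fin d), (Real.sqrt t)⁻¹ • (x - (2 * t) • v)
      = (-(2 * Real.sqrt t)) • (v - (2 * t)⁻¹ • x) := fun v => by
    have h1 : (Real.sqrt t)⁻¹ * (2 * t) = 2 * Real.sqrt t := by
      field_simp; rw [Real.sq_sqrt ht.le]
    have h2 : -(2 * Real.sqrt t) * (2 * t)⁻¹ = -(Real.sqrt t)⁻¹ := by
      field_simp; rw [Real.sq_sqrt ht.le]
    rw [smul_sub, smul_sub, smul_smul, smul_smul, h1, h2]
    module
  simp_rw [enorm_wavePacket, harg]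
  rw [Measure.lintegral_comp_smul_sub volume (‖ϑ ·‖ₑ) (neg_ne_zero.2 (by positivity)),
    finrank_euclideanSpace_fin, abs_inv, abs_pow, abs_neg, abs_of_pos (by positivity), ← inv_pow,
    ENNReal.ofReal_mul (by positivity), ofReal_integral_norm_eq_lintegral_enorm ϑ.integrable]

end WavePacket

theorem stmt8_general (d : ℕ) (ϑ : SchwartzMap (EuclideanSpace ℝ (Fin d)) ℂ)
    (t : ℝ) (ht : 0 < t) (u : EuclideanSpace ℝ (Fin d) → ℂ)
    (hu : MemLp u 2 volume) :
    MemLp (fun v => gam ϑ t u v) 2 volume ∧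
      (eLpNorm (fun v => gam ϑ t u v) 2 volume).toReal
        ≤ (2 : ℝ) ^ (-(d : ℝ) / 2) * (∫ x, ‖ϑ x‖) * (eLpNorm u 2 volume).toReal := by
  set I := ∫ x, ‖ϑ x‖
  set C := (2 : ℝ) ^ (-(d : ℝ) / 2) * I
  have hC : 0 ≤ C := by positivity
  have hk : StronglyMeasurable (uncurry fun v x => (starRingEnd ℂ) (wavePacket ϑ v t x)) :=
    (Complex.continuous_conj.comp (continuous_wavePacket_uncurry ϑ)).stronglyMeasurable
  have hAB : Real.sqrt t ^ d * I * ((2 * Real.sqrt t)⁻¹ ^ d * I) = C ^ 2 := by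
    have hs : Real.sqrt t ≠ 0 := (Real.sqrt_pos.2 ht).ne'
    rw [mul_pow, ← Real.rpow_mul_natCast zero_le_two, Nat.cast_ofNat,
      div_mul_cancel₀ _ two_ne_zero, Real.rpow_neg zero_le_two, Real.rpow_natCast,
      mul_inv, mul_pow, inv_pow, inv_pow]
    field_simp
  have hsq : eLpNorm (fun v => gam ϑ t u v) 2 volume ^ 2
      ≤ ENNReal.ofReal C ^ 2 * eLpNorm u 2 volume ^ 2 := by
    rw [← ENNReal.ofReal_pow hC, ← hAB, ENNReal.ofReal_mul (by positivity)]
    refine eLpNorm_two_integral_mul_sq_le hk (fun v => ?_) (fun x => ?_) hu.1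
    · simp_rw [RCLike.enorm_conj]; exact (lintegral_enorm_wavePacket ϑ ht v).le
    · simp_rw [RCLike.enorm_conj]; exact (lintegral_enorm_wavePacket_velocity ϑ ht x).le
  have hle : eLpNorm (fun v => gam ϑ t u v) 2 volume ≤ ENNReal.ofReal C * eLpNorm u 2 volume := by
    rwa [← ENNReal.pow_le_pow_left_iff two_ne_zero, mul_pow]
  have hfin : ENNReal.ofReal C * eLpNorm u 2 volume ≠ ⊤ :=
    ENNReal.mul_ne_top ENNReal.ofReal_ne_top hu.2.ne
  refine ⟨⟨aestronglyMeasurable_integral_mul hk hu.1, hle.trans_lt hfin.lt_top⟩, ?_⟩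
  simpa [ENNReal.toReal_mul, ENNReal.toReal_ofReal hC] using ENNReal.toReal_mono hfin hle

/-- For `u ∈ L²`, `γ(t,·) ∈ L²_v` with `‖γ(t,·)‖_{L²} ≤ 2^{−d/2} ‖ϑ‖_{L¹} ‖u‖_{L²}`. -/
theorem stmt8 (d : ℕ) (hd : 1 ≤ d) (ϑ : SchwartzMap (EuclideanSpace ℝ (Fin d)) ℂ)
    (t : ℝ) (ht : 0 < t) (u : EuclideanSpace ℝ (Fin d) → ℂ)
    (hu : MemLp u 2 volume) :
    MemLp (fun v => gam ϑ t u v) 2 volume ∧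
      (eLpNorm (fun v => gam ϑ t u v) 2 volume).toReal
        ≤ (2 : ℝ) ^ (-(d : ℝ) / 2) * (∫ x, ‖ϑ x‖) * (eLpNorm u 2 volume).toReal :=
  stmt8_general d ϑ t ht u hu
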